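/- arXiv:2605.03346 — 2 statements merged into one kernel-verified Lean document; each statement's English description precedes it below -/
import Mathlib

section
/- Let G = (V,E) be a finite directed graph, and construct the triplet instance with item set U = V ∪ {S} (S a new anchor) and triplets T = {(S,u,v) : (u,v) ∈ E}. For any embedding f : U → ℝ^d, define r(v) = ‖f(v) − f(S)‖₂ and let π be any linear order on V sorting vertices by increasing r (ties broken arbitrarily). Then every triplet (S,u,v) satisfied by f (i.e., r(u) < r(v)) corresponds to an edge (u,v) with π(u) < π(v), so acc(f;T) ≤ val(π), the fraction of edges of G oriented forward by π. -/
open Finset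

/-- Soundness of the MAS reduction: given a directed graph `E` on `V`, the triplet
instance `{(S,u,v) : (u,v) ∈ E}` with a fresh anchor `S = none`, and any embedding
`f : V ∪ {S} → ℝ^d`, sorting vertices by increasing distance to the anchor yields a
linear order `π` whose MAS value is at least the triplet accuracy of `f`. -/
theorem stmt_10 {V : Type*} [Fintype V] [DecidableEq V] (d : ℕ)
    (E : Finset (V × V)) (hE : E.Nonempty)
    (f : Option V → EuclideanSpace ℝ (Fin d)) (π : V → ℕ)
    (hπ : ∀ u v : V, dist (f none) (f (some u)) < dist (f none) (f (some v)) → π u < π v) :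
    ((E.filter fun e => dist (f none) (f (some e.1)) < dist (f none) (f (some e.2))).card : ℝ)
        / E.card
      ≤ ((E.filter fun e => π e.1 < π e.2).card : ℝ) / E.card := by
  have h : (E.filter fun e => dist (f none) (f (some e.1)) < dist (f none) (f (some e.2)))
      ⊆ E.filter fun e => π e.1 < π e.2 := fun e he => by
    simp only [Finset.mem_filter] at he ⊢
    exact ⟨he.1, hπ _ _ he.2⟩
  gcongr
end

section
/- Combining both directions of the MAS reduction: for the triplet instance T = {(S,u,v) : (u,v) ∈ E} built from a finite directed graph G = (V,E) with E nonempty, and for every d ≥ 1, the maximum of acc(f;T) over all embeddings f : V ∪ {S} → ℝ^d equals the maximum of val(π) over all linear orders π of V. -/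
/-!
An embedding only matters through the distances `‖f(S) - f(v)‖`, and sorting the vertices by
these distances (breaking ties arbitrarily) gives an ordering in which every triplet the
embedding gets right is a forward edge. Conversely, placing the vertices on a ray from `f(S)`
at distance `π v` realises the ordering `π` exactly, so the two sets of achievable values
dominate each other and have the same supremum.
-/

open Finset

section Refine

variable {ι α : Type*} [Fintype ι] [LinearOrder α]

lemma card_filter_lt_lt_card_filter_lt (key : ι → α) {u v : ι} (h : key u < key v) :
    #{w | key w < key u} < #{w | key w < key v} := by
  refine card_lt_card ⟨monotone_filter_right _ fun _ _ hw => hw.trans h, fun hsub => ?_⟩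
  simpa using hsub (mem_filter.2 ⟨mem_univ u, h⟩)

lemma exists_injective_nat_of_lt_imp_lt (g : ι → α) :
    ∃ π : ι → ℕ, Function.Injective π ∧ ∀ u v, g u < g v → π u < π v := by
  let key : ι → α ×ₗ ℕ := fun v => toLex (g v, Fintype.equivFin ι v)
  have key_injective : Function.Injective key := fun u v h =>
    (Fintype.equivFin ι).injective (Fin.ext (congrArg (·.2) (toLex.injective h)))
  have rank_lt : ∀ u v, key u < key v → #{w | key w < key u} < #{w | key w < key v} :=
    fun u v => card_filter_lt_lt_card_filter_lt key
  refine ⟨fun v => #{w | key w < key v}, fun u v h => ?_, fun u v h => rank_lt u v ?_⟩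
  · by_contra hne
    rcases (key_injective.ne hne).lt_or_gt with huv | hvu
    · exact (rank_lt u v huv).ne h
    · exact (rank_lt v u hvu).ne' h
  · exact Prod.Lex.lt_iff.2 (Or.inl h)

end Refine

section Embedding

variable {V X : Type*} (E : Finset (V × V))

lemma exists_injective_card_filter_dist_lt_le [Fintype V] [PseudoMetricSpace X]
    (f : Option V → X) :
    ∃ π : V → ℕ, Function.Injective π ∧
      #{e ∈ E | dist (f none) (f (some e.1)) < dist (f none) (f (some e.2))} ≤
        #{e ∈ E | π e.1 < π e.2} := by
  obtain ⟨π, hπ, hlt⟩ := exists_injective_nat_of_lt_imp_lt fun v => dist (f none) (f (some v))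
  exact ⟨π, hπ, card_le_card (monotone_filter_right _ fun _ _ he => hlt _ _ he)⟩

lemma exists_filter_dist_lt_eq [NormedAddCommGroup X] [NormedSpace ℝ X] [Nontrivial X]
    (π : V → ℕ) :
    ∃ f : Option V → X,
      {e ∈ E | dist (f none) (f (some e.1)) < dist (f none) (f (some e.2))} =
        {e ∈ E | π e.1 < π e.2} := by
  obtain ⟨x, hx⟩ := exists_norm_eq X zero_le_one
  have dist_ray : ∀ v, dist (0 : X) ((π v : ℝ) • x) = π v := fun v => by
    rw [dist_zero_left, norm_smul, hx, mul_one, Real.norm_natCast]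
  refine ⟨fun o => o.elim 0 fun v => (π v : ℝ) • x, filter_congr fun e _ => ?_⟩
  simp only [Option.elim, dist_ray, Nat.cast_lt]

end Embedding

lemma card_filter_div_card_le_one {β : Type*} (s : Finset β) (p : β → Prop) [DecidablePred p] :
    (#{b ∈ s | p b} : ℝ) / #s ≤ 1 :=
  div_le_one_of_le₀ (by exact_mod_cast card_filter_le s p) (Nat.cast_nonneg _)

theorem stmt_12_general {V : Type*} [Fintype V] (d : ℕ) (hd : 1 ≤ d)
    (E : Finset (V × V)) :
    sSup {a : ℝ | ∃ f : Option V → EuclideanSpace ℝ (Fin d),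
        a = ((E.filter fun e =>
              dist (f none) (f (some e.1)) < dist (f none) (f (some e.2))).card : ℝ)
            / E.card}
      = sSup {a : ℝ | ∃ π : V → ℕ, Function.Injective π ∧
          a = ((E.filter fun e => π e.1 < π e.2).card : ℝ) / E.card} := by
  have : Nonempty (Fin d) := ⟨⟨0, hd⟩⟩
  have hπ₀ : Function.Injective fun v => (Fintype.equivFin V v : ℕ) :=
    Fin.val_injective.comp (Fintype.equivFin V).injective
  have hB : BddAbove {a : ℝ | ∃ π : V → ℕ, Function.Injective π ∧
      a = (#{e ∈ E | π e.1 < π e.2} : ℝ) / #E} := ⟨1, by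
    rintro _ ⟨π, -, rfl⟩; exact card_filter_div_card_le_one _ _⟩
  apply le_antisymm
  · refine csSup_le ⟨_, 0, rfl⟩ ?_
    rintro _ ⟨f, rfl⟩
    obtain ⟨π, hπ, hle⟩ := exists_injective_card_filter_dist_lt_le E f
    exact le_csSup_of_le hB ⟨π, hπ, rfl⟩ (by gcongr)
  · refine csSup_le_csSup ⟨1, ?_⟩ ⟨_, _, hπ₀, rfl⟩ ?_
    · rintro _ ⟨f, rfl⟩
      exact card_filter_div_card_le_one _ _
    · rintro _ ⟨π, -, rfl⟩
      obtain ⟨f, hf⟩ := exists_filter_dist_lt_eq (X := EuclideanSpace ℝ (Fin d)) E π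
      exact ⟨f, by rw [hf]⟩

/-- Both directions of the MAS reduction: for the triplet instance
`T = {(S,u,v) : (u,v) ∈ E}` and every `d ≥ 1`, the best accuracy over embeddings
`f : V ∪ {S} → ℝ^d` equals the best MAS value over linear orders `π` of `V`. -/
theorem stmt_12 {V : Type*} [Fintype V] [DecidableEq V] (d : ℕ) (hd : 1 ≤ d)
    (E : Finset (V × V)) (hE : E.Nonempty) :
    sSup {a : ℝ | ∃ f : Option V → EuclideanSpace ℝ (Fin d),
        a = ((E.filter fun e =>
              dist (f none) (f (some e.1)) < dist (f none) (f (some e.2))).card : ℝ)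
            / E.card}
      = sSup {a : ℝ | ∃ π : V → ℕ, Function.Injective π ∧
          a = ((E.filter fun e => π e.1 < π e.2).card : ℝ) / E.card} :=
  stmt_12_general d hd E
end
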